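/- (Cross-ratio lower bound in the regularized local norm) Let α > 0, η > 0, R > 0, and define Φ(u) := α^{-1} H(u) + η^{-1} I_d for u ∈ Int(K). Suppose K is contained in the closed Euclidean ball of radius R centered at the origin. Let u, v ∈ Int(K) be distinct, let p, q ∈ K, and suppose u = p + s(q − p) and v = p + t(q − p) with 0 < s < t < 1. Then ( ‖u − v‖₂ · ‖p − q‖₂ / ( ‖p − u‖₂ · ‖v − q‖₂ ) )² ≥ ‖u − v‖²_{Φ(u)} / ( 2m α^{-1} + 2 η^{-1} R² ). -/

import Mathlib

open Matrix Real
open scoped BigOperators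

/-- The Hessian of the log-barrier function for the polytope `{x | A x ≤ b}`. -/
noncomputable def logBarrierHessian {m d : ℕ} (A : Matrix (Fin m) (Fin d) ℝ) (b : Fin m → ℝ)
    (x : Fin d → ℝ) : Matrix (Fin d) (Fin d) ℝ :=
  ∑ i, ((b i - A.mulVec x i) ^ 2)⁻¹ • Matrix.vecMulVec (A i) (A i)

/-- The local norm `‖h‖_M = √(hᵀ M h)`. -/
noncomputable def mnorm {d : ℕ} (M : Matrix (Fin d) (Fin d) ℝ) (h : Fin d → ℝ) : ℝ :=
  Real.sqrt (h ⬝ᵥ M.mulVec h)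

/-- The Euclidean (ℓ²) norm on `ℝ^d`. -/
noncomputable def l2norm {d : ℕ} (x : Fin d → ℝ) : ℝ :=
  Real.sqrt (∑ i, x i ^ 2)
/-!
Along the chord every difference of the points `p, u, v, q` is a multiple of `w = q - p`, so the
cross ratio is `(t - s) / (s (1 - t))` and `‖u - v‖²_Φ = (t - s)² ‖w‖²_Φ`. Put `c = s (1 - t)`, so
`c ≤ min s (1 - s)`. The slack of `u` in constraint `i` is the convex combination
`(1 - s) sᵢ(p) + s sᵢ(q)` of nonnegative slacks, hence dominates `c |aᵢᵀw| = c |sᵢ(p) - sᵢ(q)|`;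
summing gives `c² ‖w‖²_H ≤ m`. Since `c ≤ 1/2` and `‖w‖₂ ≤ 2R`, also `c² ‖w‖₂² ≤ R²`.
-/

section Euclidean

variable {d : ℕ}

lemma l2norm_eq_norm_toLp (x : Fin d → ℝ) : l2norm x = ‖WithLp.toLp 2 x‖ := by
  simp [l2norm, EuclideanSpace.norm_eq]

lemma l2norm_nonneg (x : Fin d → ℝ) : 0 ≤ l2norm x := Real.sqrt_nonneg _

lemma l2norm_sq (x : Fin d → ℝ) : l2norm x ^ 2 = x ⬝ᵥ x := by
  rw [l2norm, Real.sq_sqrt (by positivity)]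
  simp [dotProduct, sq]

lemma l2norm_smul (c : ℝ) (x : Fin d → ℝ) : l2norm (c • x) = |c| * l2norm x := by
  simp only [l2norm_eq_norm_toLp, WithLp.toLp_smul, norm_smul, Real.norm_eq_abs]

lemma l2norm_sub_le (x y : Fin d → ℝ) : l2norm (x - y) ≤ l2norm x + l2norm y := by
  simpa only [l2norm_eq_norm_toLp, WithLp.toLp_sub] using norm_sub_le _ _

lemma l2norm_pos {x : Fin d → ℝ} (hx : x ≠ 0) : 0 < l2norm x := by
  rw [l2norm_eq_norm_toLp, norm_pos_iff]
  exact fun h => hx (congrArg WithLp.ofLp h)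

lemma crossRatio_chord {p q : Fin d → ℝ} (hpq : p ≠ q) (s t : ℝ) :
    l2norm (p + s • (q - p) - (p + t • (q - p))) * l2norm (p - q) /
        (l2norm (p - (p + s • (q - p))) * l2norm (p + t • (q - p) - q)) =
      |t - s| / (|s| * |1 - t|) := by
  have hL : l2norm (q - p) ≠ 0 := (l2norm_pos (sub_ne_zero.2 hpq.symm)).ne'
  rw [show p + s • (q - p) - (p + t • (q - p)) = (s - t) • (q - p) by module,
    show p - q = (-1 : ℝ) • (q - p) by module, show p - (p + s • (q - p)) = (-s) • (q - p) by module,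
    show p + t • (q - p) - q = (t - 1) • (q - p) by module]
  simp only [l2norm_smul, abs_neg, abs_one, abs_sub_comm s t, abs_sub_comm t 1]
  field_simp

end Euclidean

lemma mnorm_smul_sq {d : ℕ} (M : Matrix (Fin d) (Fin d) ℝ) (k : ℝ) {h : Fin d → ℝ}
    (hM : 0 ≤ h ⬝ᵥ M *ᵥ h) : mnorm M (k • h) ^ 2 = k ^ 2 * (h ⬝ᵥ M *ᵥ h) := by
  have hquad : k • h ⬝ᵥ M *ᵥ (k • h) = k ^ 2 * (h ⬝ᵥ M *ᵥ h) := by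
    simp only [Matrix.mulVec_smul, dotProduct_smul, smul_dotProduct, smul_eq_mul]
    ring
  rw [mnorm, hquad, Real.sq_sqrt (by positivity)]

lemma dotProduct_smul_add_smul_one_mulVec {d : ℕ} (M : Matrix (Fin d) (Fin d) ℝ) (a c : ℝ)
    (h : Fin d → ℝ) :
    h ⬝ᵥ (a • M + c • 1) *ᵥ h = a * (h ⬝ᵥ M *ᵥ h) + c * l2norm h ^ 2 := by
  rw [Matrix.add_mulVec, Matrix.smul_mulVec, Matrix.smul_mulVec, Matrix.one_mulVec, dotProduct_add,
    dotProduct_smul, dotProduct_smul, smul_eq_mul, smul_eq_mul, l2norm_sq]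

lemma mulVec_chord_slack {ι n R : Type*} [Fintype n] [CommRing R] (A : Matrix ι n R) (b : ι → R)
    (p q : n → R) (s : R) (i : ι) :
    b i - (A *ᵥ (p + s • (q - p))) i = (1 - s) * (b i - (A *ᵥ p) i) + s * (b i - (A *ᵥ q) i) := by
  simp only [Matrix.mulVec_add, Matrix.mulVec_smul, Matrix.mulVec_sub, Pi.add_apply,
    Pi.smul_apply, Pi.sub_apply, smul_eq_mul]
  ring

lemma mul_abs_sub_le_convexComb {c s x y : ℝ} (hc : 0 ≤ c) (hcs : c ≤ s) (hcs' : c ≤ 1 - s)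
    (hx : 0 ≤ x) (hy : 0 ≤ y) : c * |x - y| ≤ (1 - s) * x + s * y :=
  calc c * |x - y| ≤ c * (x + y) :=
        mul_le_mul_of_nonneg_left (abs_sub_le_iff.2 ⟨by linarith, by linarith⟩) hc
    _ ≤ (1 - s) * x + s * y := by
        nlinarith [mul_le_mul_of_nonneg_right hcs' hx, mul_le_mul_of_nonneg_right hcs hy]

section LogBarrier

variable {m d : ℕ} (A : Matrix (Fin m) (Fin d) ℝ) (b : Fin m → ℝ)

lemma dotProduct_logBarrierHessian_mulVec (x h : Fin d → ℝ) :
    h ⬝ᵥ logBarrierHessian A b x *ᵥ h = ∑ i, (A i ⬝ᵥ h) ^ 2 / (b i - (A *ᵥ x) i) ^ 2 := by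
  rw [logBarrierHessian, Matrix.sum_mulVec, dotProduct_sum]
  refine Finset.sum_congr rfl fun i _ => ?_
  rw [Matrix.smul_mulVec, Matrix.vecMulVec_mulVec, op_smul_eq_smul, dotProduct_smul,
    dotProduct_smul, smul_eq_mul, smul_eq_mul, dotProduct_comm h]
  ring

lemma dotProduct_logBarrierHessian_mulVec_nonneg (x h : Fin d → ℝ) :
    0 ≤ h ⬝ᵥ logBarrierHessian A b x *ᵥ h := by
  rw [dotProduct_logBarrierHessian_mulVec]
  positivity

variable {A b} {p q : Fin d → ℝ} {c s : ℝ}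

lemma sq_mul_div_chord_slack_sq_le_one {i : Fin m} (hp : (A *ᵥ p) i ≤ b i)
    (hq : (A *ᵥ q) i ≤ b i) (hc : 0 ≤ c) (hcs : c ≤ s) (hcs' : c ≤ 1 - s) :
    (c * (A i ⬝ᵥ (q - p))) ^ 2 / (b i - (A *ᵥ (p + s • (q - p))) i) ^ 2 ≤ 1 := by
  have hAw : A i ⬝ᵥ (q - p) = (b i - (A *ᵥ p) i) - (b i - (A *ᵥ q) i) := by
    rw [dotProduct_sub]; simp only [Matrix.mulVec]; ring
  have hslack : c * |A i ⬝ᵥ (q - p)| ≤ b i - (A *ᵥ (p + s • (q - p))) i := by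
    rw [hAw, mulVec_chord_slack]
    exact mul_abs_sub_le_convexComb hc hcs hcs' (sub_nonneg.2 hp) (sub_nonneg.2 hq)
  refine div_le_one_of_le₀ (sq_le_sq.2 ?_) (sq_nonneg _)
  rw [abs_mul, abs_of_nonneg hc]
  exact hslack.trans (le_abs_self _)

lemma sq_mul_dotProduct_logBarrierHessian_chord_le (hp : ∀ i, (A *ᵥ p) i ≤ b i)
    (hq : ∀ i, (A *ᵥ q) i ≤ b i) (hc : 0 ≤ c) (hcs : c ≤ s) (hcs' : c ≤ 1 - s) :
    c ^ 2 * ((q - p) ⬝ᵥ logBarrierHessian A b (p + s • (q - p)) *ᵥ (q - p)) ≤ m := by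
  rw [dotProduct_logBarrierHessian_mulVec, Finset.mul_sum]
  calc _ ≤ ∑ _i : Fin m, (1 : ℝ) := Finset.sum_le_sum fun i _ => by
          rw [← mul_div_assoc, ← mul_pow]
          exact sq_mul_div_chord_slack_sq_le_one (hp i) (hq i) hc hcs hcs'
    _ = m := by simp

lemma sq_mul_regularized_chord_le {α η R : ℝ} (hα : 0 ≤ α) (hη : 0 ≤ η)
    (hK : ∀ x : Fin d → ℝ, (∀ i, (A *ᵥ x) i ≤ b i) → l2norm x ≤ R)
    (hp : ∀ i, (A *ᵥ p) i ≤ b i) (hq : ∀ i, (A *ᵥ q) i ≤ b i)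
    (hc : 0 ≤ c) (hcs : c ≤ s) (hcs' : c ≤ 1 - s) :
    c ^ 2 * ((q - p) ⬝ᵥ (α⁻¹ • logBarrierHessian A b (p + s • (q - p)) +
        η⁻¹ • (1 : Matrix (Fin d) (Fin d) ℝ)) *ᵥ (q - p)) ≤
      2 * m * α⁻¹ + 2 * η⁻¹ * R ^ 2 := by
  have hdiam : l2norm (q - p) ≤ 2 * R :=
    (l2norm_sub_le q p).trans (by linarith [hK q hq, hK p hp])
  have heucl : (c * l2norm (q - p)) ^ 2 ≤ R ^ 2 :=
    pow_le_pow_left₀ (mul_nonneg hc (l2norm_nonneg _))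
      (by nlinarith [l2norm_nonneg (q - p)]) 2
  have hbarrier := sq_mul_dotProduct_logBarrierHessian_chord_le hp hq hc hcs hcs'
  have hα' : 0 ≤ α⁻¹ := by positivity
  have hη' : 0 ≤ η⁻¹ := by positivity
  rw [dotProduct_smul_add_smul_one_mulVec]
  calc _ = α⁻¹ * (c ^ 2 * ((q - p) ⬝ᵥ logBarrierHessian A b (p + s • (q - p)) *ᵥ (q - p))) +
        η⁻¹ * (c * l2norm (q - p)) ^ 2 := by ring
    _ ≤ α⁻¹ * m + η⁻¹ * R ^ 2 := by gcongr
    _ ≤ 2 * m * α⁻¹ + 2 * η⁻¹ * R ^ 2 := by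
        linarith [mul_nonneg hα' (Nat.cast_nonneg (α := ℝ) m), mul_nonneg hη' (sq_nonneg R)]

end LogBarrier

theorem stmt11_general {m d : ℕ} (A : Matrix (Fin m) (Fin d) ℝ) (b : Fin m → ℝ)
    (α η R : ℝ) (hα : 0 < α) (hη : 0 < η)
    (hK : ∀ x : Fin d → ℝ, (∀ i, A.mulVec x i ≤ b i) → l2norm x ≤ R)
    (u v p q : Fin d → ℝ) (huv : u ≠ v)
    (hp : ∀ i, A.mulVec p i ≤ b i) (hq : ∀ i, A.mulVec q i ≤ b i)
    (s t : ℝ) (hs : 0 < s) (hst : s < t) (ht : t < 1)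
    (hus : u = p + s • (q - p)) (hvt : v = p + t • (q - p)) :
    mnorm (α⁻¹ • logBarrierHessian A b u + η⁻¹ • (1 : Matrix (Fin d) (Fin d) ℝ)) (u - v) ^ 2 /
        (2 * m * α⁻¹ + 2 * η⁻¹ * R ^ 2) ≤
      (l2norm (u - v) * l2norm (p - q) / (l2norm (p - u) * l2norm (v - q))) ^ 2 := by
  subst hus hvt
  have hpq : p ≠ q := by rintro rfl; simp at huv
  have hc : 0 < s * (1 - t) := mul_pos hs (by linarith)
  have hbound := sq_mul_regularized_chord_le hα.le hη.le hK hp hq hc.le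
    (by nlinarith : s * (1 - t) ≤ s) (by nlinarith : s * (1 - t) ≤ 1 - s)
  have hQ : 0 ≤ (q - p) ⬝ᵥ (α⁻¹ • logBarrierHessian A b (p + s • (q - p)) +
      η⁻¹ • (1 : Matrix (Fin d) (Fin d) ℝ)) *ᵥ (q - p) := by
    rw [dotProduct_smul_add_smul_one_mulVec]
    have := dotProduct_logBarrierHessian_mulVec_nonneg A b (p + s • (q - p)) (q - p)
    exact add_nonneg (mul_nonneg (by positivity) this) (by positivity)
  rw [crossRatio_chord hpq, div_pow, mul_pow, sq_abs, sq_abs, sq_abs, ← mul_pow,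
    show p + s • (q - p) - (p + t • (q - p)) = (s - t) • (q - p) by module, mnorm_smul_sq _ _ hQ]
  refine div_le_of_le_mul₀ (by positivity) (by positivity) ?_
  rw [div_mul_eq_mul_div, le_div_iff₀ (by positivity)]
  linear_combination mul_le_mul_of_nonneg_left hbound (sq_nonneg (t - s))

/-- **Cross-ratio lower bound in the regularized local norm.** For
`Φ(u) := α⁻¹ H(u) + η⁻¹ I_d`, and `K` contained in the closed ball of radius `R` about `0`,
for distinct `u, v ∈ Int K` on a chord `[p,q] ⊆ K` in the order `p, u, v, q`,
`(‖u-v‖₂ ‖p-q‖₂ / (‖p-u‖₂ ‖v-q‖₂))² ≥ ‖u-v‖²_{Φ(u)} / (2 m α⁻¹ + 2 η⁻¹ R²)`. -/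
theorem stmt11 {m d : ℕ} (A : Matrix (Fin m) (Fin d) ℝ) (b : Fin m → ℝ)
    (α η R : ℝ) (hα : 0 < α) (hη : 0 < η) (hR : 0 < R)
    (hK : ∀ x : Fin d → ℝ, (∀ i, A.mulVec x i ≤ b i) → l2norm x ≤ R)
    (u v p q : Fin d → ℝ) (huv : u ≠ v)
    (hu : ∀ i, A.mulVec u i < b i) (hv : ∀ i, A.mulVec v i < b i)
    (hp : ∀ i, A.mulVec p i ≤ b i) (hq : ∀ i, A.mulVec q i ≤ b i)
    (s t : ℝ) (hs : 0 < s) (hst : s < t) (ht : t < 1)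
    (hus : u = p + s • (q - p)) (hvt : v = p + t • (q - p)) :
    mnorm (α⁻¹ • logBarrierHessian A b u + η⁻¹ • (1 : Matrix (Fin d) (Fin d) ℝ)) (u - v) ^ 2 /
        (2 * m * α⁻¹ + 2 * η⁻¹ * R ^ 2) ≤
      (l2norm (u - v) * l2norm (p - q) / (l2norm (p - u) * l2norm (v - q))) ^ 2 :=
  stmt11_general A b α η R hα hη hK u v p q huv hp hq s t hs hst ht hus hvt
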